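/- In the 8-dimensional Lie algebra h̄_b with basis f_0,…,f_7 and brackets [f_0,f_i]=f_{i+1} (1≤i≤6), [f_1,f_2]=(1/10)f_5−(27/100)b f_6+(1+(5143/7000)b²)f_7, [f_1,f_3]=(1/10)f_6−(27/100)b f_7, [f_1,f_4]=(3/35)f_7, [f_2,f_3]=(1/70)f_7, every derivation D satisfies: writing D f_j = Σ_k m_{k+1,j+1} f_k, the diagonal entries obey m_{i+1,i+1} = (i+2) m_{1,1} for 1 ≤ i ≤ 7. -/

import Mathlib

open scoped BigOperators

/-- Structure constants of the 8-dimensional Lie algebra `h̄_b`: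
`hbarSC b i j k` is the coefficient of `f_k` in `⁅f_i, f_j⁆` for `i < j`
(and `0` otherwise; the full antisymmetric constants are obtained below). -/
noncomputable def hbarSC (b : ℂ) : ℕ → ℕ → ℕ → ℂ
  | 0, j, k => if 1 ≤ j ∧ j ≤ 6 ∧ k = j + 1 then 1 else 0
  | 1, 2, 5 => 1/10
  | 1, 2, 6 => -(27/100) * b
  | 1, 2, 7 => 1 + (5143/7000) * b^2
  | 1, 3, 6 => 1/10
  | 1, 3, 7 => -(27/100) * b
  | 1, 4, 7 => 3/35
  | 2, 3, 7 => 1/70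
  | _, _, _ => 0

/-- The full (antisymmetrized) structure constants of `h̄_b`. -/
noncomputable def hbarC (b : ℂ) (i j k : Fin 8) : ℂ :=
  hbarSC b i j k - hbarSC b j i k

/-!
Write `m k j` for the coefficient of `f_k` in `D f_j`. Since `⁅f_l, f_j⁆` for `l, j ≥ 1` only
involves `f_k` with `k ≥ l + j + 2`, expanding `D f_{j+1} = D ⁅f_0, f_j⁆` on and above the diagonal
gives `m (j+1) (j+1) = m 0 0 + m j j`, shows that in rows `k ≥ 1` the entries above the diagonal
are constant along diagonals, and that they vanish in row `1`. The coefficient of `f_5` in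
`D ⁅f_1, f_2⁆ = D (f_5 / 10 + …)` then reads `m 5 5 = m 1 1 + m 2 2`, which forces
`m 1 1 = 3 m 0 0`.
-/

/-- `m k j` stands for the coefficient of the `k`-th basis vector in the image of the `j`-th. -/
def IsDerivationMatrix {R ι : Type*} [CommRing R] [Fintype ι] (c : ι → ι → ι → R)
    (m : ι → ι → R) : Prop :=
  ∀ i j k, ∑ l, c i j l * m k l = ∑ l, m l i * c l j k + ∑ l, m l j * c i l k

section
variable {R L ι : Type*} [CommRing R] [LieRing L] [LieAlgebra R L] [Fintype ι]
  {B : Module.Basis ι R L} {c : ι → ι → ι → R}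

theorem Module.Basis.repr_lie_apply (hB : ∀ i j, ⁅B i, B j⁆ = ∑ k, c i j k • B k)
    (x y : L) (k : ι) :
    B.repr ⁅x, y⁆ k = ∑ i, ∑ j, B.repr x i * B.repr y j * c i j k := by
  have hBk : ∀ i j, B.repr ⁅B i, B j⁆ k = c i j k := fun i j => by rw [hB, B.repr_sum_self]
  calc B.repr ⁅x, y⁆ k
      = B.repr ⁅∑ i, B.repr x i • B i, ∑ j, B.repr y j • B j⁆ k := by rw [B.sum_repr, B.sum_repr]
    _ = _ := by
      simp only [sum_lie, lie_sum, smul_lie, lie_smul, map_sum, map_smul, Finsupp.coe_finsetSum,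
        Finset.sum_apply, Finsupp.smul_apply, hBk, smul_eq_mul, Finset.mul_sum, mul_assoc]
      rw [Finset.sum_comm]
      simp only [mul_left_comm]

theorem LieDerivation.isDerivationMatrix_repr (hB : ∀ i j, ⁅B i, B j⁆ = ∑ k, c i j k • B k)
    (D : LieDerivation R L L) :
    IsDerivationMatrix c fun k j => B.repr (D (B j)) k := by
  classical
  intro i j k
  have h := congrArg (fun x => B.repr x k) (D.apply_lie_eq_add (B i) (B j))
  simp only [map_add, Finsupp.add_apply, B.repr_lie_apply hB, hB, map_sum, map_smul] at h
  simpa [Finsupp.single_apply, add_comm] using h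

end

namespace IsDerivationMatrix

variable {b : ℂ} {m : Fin 8 → Fin 8 → ℂ}

theorem hbar_diag_succ (hm : IsDerivationMatrix (hbarC b) m) (j : Fin 7) (hj : 1 ≤ j) :
    m j.succ j.succ = m 0 0 + m j.castSucc j.castSucc := by
  have h := hm 0 j.castSucc j.succ
  fin_cases j <;> simp at hj <;> simp only [Fin.sum_univ_eight, hbarC] at h ⊢ <;>
    norm_num [hbarSC] at h <;> exact h

theorem hbar_shift (hm : IsDerivationMatrix (hbarC b) m) (j k : Fin 7) (hk : 1 ≤ k)
    (hkj : k < j) : m k.succ j.succ = m k.castSucc j.castSucc := by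
  have h := hm 0 j.castSucc k.succ
  fin_cases j <;> fin_cases k <;> simp at hk hkj <;>
    simp only [Fin.sum_univ_eight, hbarC] at h ⊢ <;> norm_num [hbarSC] at h <;> exact h

theorem hbar_one_succ_eq_zero (hm : IsDerivationMatrix (hbarC b) m) (j : Fin 7) (hj : 1 ≤ j) :
    m 1 j.succ = 0 := by
  have h := hm 0 j.castSucc 1
  fin_cases j <;> simp at hj <;> simp only [Fin.sum_univ_eight, hbarC] at h ⊢ <;>
    norm_num [hbarSC] at h <;> exact h

theorem hbar_eq_zero_of_lt (hm : IsDerivationMatrix (hbarC b) m) :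
    ∀ k j : Fin 8, 1 ≤ k → k < j → m k j = 0 := by
  intro k
  induction k using Fin.induction with
  | zero => simp
  | succ k ih =>
    intro j _ hkj
    obtain ⟨j, rfl⟩ := Fin.exists_succ_eq.mpr (Fin.ne_zero_of_lt hkj)
    rw [Fin.succ_lt_succ_iff] at hkj
    obtain rfl | hk := eq_or_ne k 0
    · exact hm.hbar_one_succ_eq_zero j hkj
    · rw [hm.hbar_shift j k (Fin.one_le_of_ne_zero hk) hkj]
      exact ih _ (Fin.one_le_of_ne_zero (Fin.castSucc_ne_zero_iff.mpr hk))
        (Fin.castSucc_lt_castSucc_iff.mpr hkj)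

theorem hbar_five_five (hm : IsDerivationMatrix (hbarC b) m) : m 5 5 = m 1 1 + m 2 2 := by
  have h := hm 1 2 5
  simp only [Fin.sum_univ_eight, hbarC] at h
  norm_num [hbarSC, hm.hbar_eq_zero_of_lt 5 6 (by decide) (by decide),
    hm.hbar_eq_zero_of_lt 5 7 (by decide) (by decide)] at h
  linear_combination 10 * h

theorem hbar_one_one (hm : IsDerivationMatrix (hbarC b) m) : m 1 1 = 3 * m 0 0 := by
  have h3 : m 3 3 = m 0 0 + m 2 2 := hm.hbar_diag_succ 2 (by decide)
  have h4 : m 4 4 = m 0 0 + m 3 3 := hm.hbar_diag_succ 3 (by decide)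
  have h5 : m 5 5 = m 0 0 + m 4 4 := hm.hbar_diag_succ 4 (by decide)
  linear_combination h5 + h4 + h3 - hm.hbar_five_five

theorem hbar_diag (hm : IsDerivationMatrix (hbarC b) m) :
    ∀ i : Fin 8, 1 ≤ (i : ℕ) → m i i = ((i : ℕ) + 2 : ℂ) * m 0 0 := by
  intro i
  induction i using Fin.induction with
  | zero => simp
  | succ i ih =>
    intro _
    obtain rfl | hi := eq_or_ne i 0
    · rw [Fin.succ_zero_eq_one, hm.hbar_one_one, Fin.val_one]
      norm_num
    · have hi' : 1 ≤ (i.castSucc : ℕ) :=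
        Nat.one_le_iff_ne_zero.mpr (Fin.val_ne_zero_iff.mpr (Fin.castSucc_ne_zero_iff.mpr hi))
      rw [hm.hbar_diag_succ i (Fin.one_le_of_ne_zero hi), ih hi']
      push_cast [Fin.val_succ, Fin.val_castSucc]
      ring

end IsDerivationMatrix

/-- For every derivation `D` of `h̄_b`, writing `m_{k+1,j+1}` for the coefficient of `f_k`
in `D f_j`, the diagonal entries satisfy `m_{i+1,i+1} = (i+2) m_{1,1}` for `1 ≤ i ≤ 7`. -/
theorem hbar_derivation_diagonal
    (b : ℂ) (L : Type*) [LieRing L] [LieAlgebra ℂ L]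
    (B : Module.Basis (Fin 8) ℂ L)
    (hB : ∀ i j : Fin 8, ⁅B i, B j⁆ = ∑ k : Fin 8, hbarC b i j k • B k)
    (D : LieDerivation ℂ L L) :
    ∀ i : Fin 8, 1 ≤ (i : ℕ) →
      B.repr (D (B i)) i = ((i : ℕ) + 2 : ℂ) * B.repr (D (B 0)) 0 :=
  (D.isDerivationMatrix_repr hB).hbar_diag
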